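/- For a < b, 1/2 < α ≤ 1, and s ∈ (a,b), the diagonal identity G(s,s) = (K(a,a)K(s,s) - K(a,s)²)/K(a,a) holds, and K(a,a)K(s,s) - K(a,s)² ≥ 0. -/

import Mathlib

open Real MeasureTheory Set

/-- Kernel `K(x,t) = (1/Γ(α)²) ∫_{max{x,t}}^{b} (s-x)^{α-1}(s-t)^{α-1} ds`. -/
noncomputable def K (b α x t : ℝ) : ℝ :=
  (1 / Real.Gamma α ^ 2) * ∫ s in max x t..b, (s - x) ^ (α - 1) * (s - t) ^ (α - 1)

/-- Green's function `G(x,t) = K(x,t) - K(a,t)K(x,a)/K(a,a)`. -/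
noncomputable def G (a b α x t : ℝ) : ℝ :=
  K b α x t - K b α a t * K b α x a / K b α a a

/-! Up to the factor `Γ(α)⁻²`, `K(x,t)` for `x ≤ t` is the `L²(t,b)` inner product of
`(· - x)^(α-1)` and `(· - t)^(α-1)`, both square integrable because `2α - 2 > -1`.
Cauchy–Schwarz on `(s,b)`, followed by enlarging `(s,b)` to `(a,b)` in the integral of the
nonnegative function `(u - a)^(2α-2)`, gives `K(a,s)² ≤ K(a,a) K(s,s)`. As `K(a,a) > 0` and `K`
is symmetric, the identity for `G(s,s)` is then just algebra. -/

theorem sq_integral_mul_le_integral_mul_self_mul {X : Type*} [MeasurableSpace X] {μ : Measure X}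
    {f g : X → ℝ} (hf : MemLp f 2 μ) (hg : MemLp g 2 μ) :
    (∫ x, f x * g x ∂μ) ^ 2 ≤ (∫ x, f x * f x ∂μ) * ∫ x, g x * g x ∂μ := by
  have inner_toLp : ∀ {u v : X → ℝ} (hu : MemLp u 2 μ) (hv : MemLp v 2 μ),
      inner ℝ (hu.toLp u) (hv.toLp v) = ∫ x, u x * v x ∂μ := by
    intro u v hu hv
    rw [L2.inner_def]
    refine integral_congr_ae ?_
    filter_upwards [hu.coeFn_toLp, hv.coeFn_toLp] with x hux hvx
    rw [Real.inner_apply, hux, hvx]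
  simpa only [inner_toLp, sq] using real_inner_mul_inner_self_le (hf.toLp f) (hg.toLp g)

section Kernel

variable {b α : ℝ}

theorem K_comm (x t : ℝ) : K b α x t = K b α t x := by
  rw [K, K, max_comm]
  congr 1
  exact intervalIntegral.integral_congr fun u _ => mul_comm _ _

theorem K_of_le {x t : ℝ} (hxt : x ≤ t) (htb : t ≤ b) :
    K b α x t = 1 / Gamma α ^ 2 * ∫ u in Ioc t b, (u - x) ^ (α - 1) * (u - t) ^ (α - 1) := by
  rw [K, max_eq_right hxt, intervalIntegral.integral_of_le htb]

theorem memLp_two_sub_rpow_Ioc (hα : 1 / 2 < α) (x : ℝ) :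
    MemLp (fun u => (u - x) ^ (α - 1)) 2 (volume.restrict (Ioc x b)) := by
  refine (memLp_two_iff_integrable_sq
    ((measurable_id.sub_const x).pow_const (α - 1)).aestronglyMeasurable).2 ?_
  have hint : IntegrableOn (fun u => (u - x) ^ (2 * α - 2)) (Ioc x b) := by
    rcases le_total x b with hxb | hbx
    · have := (intervalIntegral.intervalIntegrable_rpow' (a := 0) (b := b - x)
        (by linarith : (-1 : ℝ) < 2 * α - 2)).comp_sub_right x
      simpa [intervalIntegrable_iff_integrableOn_Ioc_of_le hxb] using this
    · simp [Ioc_eq_empty_of_le hbx]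
  refine hint.congr_fun (fun u hu => ?_) measurableSet_Ioc
  rw [id, ← rpow_mul_natCast (sub_pos.2 hu.1).le]
  ring_nf

theorem K_self_pos {x : ℝ} (hα : 1 / 2 < α) (hxb : x < b) : 0 < K b α x x := by
  have hΓ : 0 < Gamma α := Gamma_pos_of_pos (by linarith)
  have hint := (memLp_two_sub_rpow_Ioc (b := b) hα x).integrable_sq
  simp only [sq] at hint
  rw [K, max_self]
  refine mul_pos (by positivity) (intervalIntegral.intervalIntegral_pos_of_pos_on
    ((intervalIntegrable_iff_integrableOn_Ioc_of_le hxb.le).2 hint) (fun u hu => ?_) hxb)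
  have hpos := rpow_pos_of_pos (sub_pos.2 hu.1) (α - 1)
  positivity

theorem sq_K_le_K_self_mul_K_self {a s : ℝ} (hα : 1 / 2 < α) (has : a ≤ s) (hsb : s ≤ b) :
    K b α a s ^ 2 ≤ K b α a a * K b α s s := by
  set c := 1 / Gamma α ^ 2
  set f := fun u : ℝ => (u - a) ^ (α - 1)
  set g := fun u : ℝ => (u - s) ^ (α - 1)
  have hf : MemLp f 2 (volume.restrict (Ioc a b)) := memLp_two_sub_rpow_Ioc hα a
  have hg : MemLp g 2 (volume.restrict (Ioc s b)) := memLp_two_sub_rpow_Ioc hα s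
  have hsa : Ioc s b ⊆ Ioc a b := Ioc_subset_Ioc_left has
  have cauchy_schwarz := sq_integral_mul_le_integral_mul_self_mul
    (hf.mono_measure (Measure.restrict_mono hsa le_rfl)) hg
  have mono : ∫ u in Ioc s b, f u * f u ≤ ∫ u in Ioc a b, f u * f u :=
    setIntegral_mono_set (by simpa only [sq, IntegrableOn] using hf.integrable_sq)
      (ae_of_all _ fun u => mul_self_nonneg _) hsa.eventuallyLE
  have hg_nonneg : 0 ≤ ∫ u in Ioc s b, g u * g u := integral_nonneg fun u => mul_self_nonneg _
  rw [K_of_le has hsb, K_of_le le_rfl (has.trans hsb), K_of_le le_rfl hsb]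
  calc (c * ∫ u in Ioc s b, f u * g u) ^ 2
      = c ^ 2 * (∫ u in Ioc s b, f u * g u) ^ 2 := by ring
    _ ≤ c ^ 2 * ((∫ u in Ioc a b, f u * f u) * ∫ u in Ioc s b, g u * g u) := by
        gcongr
        exact cauchy_schwarz.trans (mul_le_mul_of_nonneg_right mono hg_nonneg)
    _ = (c * ∫ u in Ioc a b, f u * f u) * (c * ∫ u in Ioc s b, g u * g u) := by ring

end Kernel

theorem G_diag_identity_general (a b α : ℝ) (hα₁ : 1 / 2 < α)
    (s : ℝ) (hs : s ∈ Set.Ioo a b) :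
    G a b α s s = (K b α a a * K b α s s - K b α a s ^ 2) / K b α a a ∧
      0 ≤ K b α a a * K b α s s - K b α a s ^ 2 := by
  have hKaa : 0 < K b α a a := K_self_pos hα₁ (hs.1.trans hs.2)
  refine ⟨?_, sub_nonneg.2 (sq_K_le_K_self_mul_K_self hα₁ hs.1.le hs.2.le)⟩
  rw [G, K_comm s a]
  field_simp

/-- diagonal identity for G and the Cauchy–Schwarz-type nonnegativity. -/
theorem G_diag_identity (a b α : ℝ) (hab : a < b) (hα₁ : 1 / 2 < α) (hα₂ : α ≤ 1)
    (s : ℝ) (hs : s ∈ Set.Ioo a b) :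
    G a b α s s = (K b α a a * K b α s s - K b α a s ^ 2) / K b α a a ∧
      0 ≤ K b α a a * K b α s s - K b α a s ^ 2 :=
  G_diag_identity_general a b α hα₁ s hs
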